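/- Let p be an odd prime and let f : (ZMod p)^n → ℂ be a non-constant Boolean function (f(x) ∈ {−1,1} for all x). Suppose |f̂(0)| is maximal over all Fourier coefficients in absolute value, and let β ≠ 0 be such that |f̂(β)| is maximal over all γ ≠ 0. Then 2·|f̂(0)| ≤ ∑_{γ ∈ (ZMod p)^n, γ ≠ 0, γ ≠ β} min(|f̂(γ)|, |f̂(γ−β)|). -/

import Mathlib

/-!
Modulating `f` by `χ_β` shifts its spectrum by `β`, so Plancherel turns
`∑_γ f̂(γ) conj f̂(γ - β)` into the mean of `|f|² conj χ_β = conj χ_β`, which vanishes for `β ≠ 0`.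
As `f` is real, the terms `γ = 0` and `γ = β` both equal `f̂(0) f̂(β)`, so `2 |f̂(0)| |f̂(β)|` is
bounded by the remaining terms, each at most `|f̂(β)| min(|f̂(γ)|, |f̂(γ - β)|)` by the maximality
of `|f̂(β)|`. Finally `f̂(β) ≠ 0`, since by Fourier inversion a function whose nonzero coefficients
all vanish is constant.
-/

/-- `ω = exp(2πi/p)`, a primitive `p`-th root of unity. -/
noncomputable def pomega (p : ℕ) : ℂ :=
  Complex.exp (2 * Real.pi * Complex.I / p)

/-- The character `χ_α(x) = ω^{⟨α,x⟩}` on `(ZMod p)^n` (well-defined via `ZMod.val`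
since `ω^p = 1`). -/
noncomputable def pchi (p n : ℕ) (α x : Fin n → ZMod p) : ℂ :=
  pomega p ^ (∑ i, α i * x i : ZMod p).val

/-- The Fourier coefficient `f̂(α) = p^{-n} ∑_x f(x) conj(χ_α(x))`. -/
noncomputable def phat (p n : ℕ) [NeZero p] (f : (Fin n → ZMod p) → ℂ)
    (α : Fin n → ZMod p) : ℂ :=
  ((p : ℂ) ^ n)⁻¹ * ∑ x : Fin n → ZMod p, f x * (starRingEnd ℂ) (pchi p n α x)

open Finset ComplexConjugate ZMod

lemma sum_stdAddChar_dotProduct {ι : Type*} [Fintype ι] [DecidableEq ι] {N : ℕ} [NeZero N]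
    (v : ι → ZMod N) :
    ∑ γ, stdAddChar (γ ⬝ᵥ v) = if v = 0 then (N : ℂ) ^ Fintype.card ι else 0 := by
  let ψ : AddChar (ι → ZMod N) ℂ :=
    stdAddChar.compAddMonoidHom (AddMonoidHom.mk' (· ⬝ᵥ v) fun a b ↦ add_dotProduct a b v)
  have hψ : ψ = 0 ↔ v = 0 := by
    refine ⟨fun h ↦ funext fun j ↦ injective_stdAddChar ?_, fun h ↦ ?_⟩
    · simpa [ψ, single_dotProduct] using DFunLike.congr_fun h (Pi.single j 1)
    · ext γ; simp [ψ, h]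
  classical
  simpa [ψ, hψ, ZMod.card] using AddChar.sum_eq_ite ψ

section Fourier

variable {p n : ℕ} [NeZero p]

lemma pomega_pow_val (a : ZMod p) : pomega p ^ a.val = stdAddChar a := by
  rw [stdAddChar_apply, toCircle_apply, pomega, ← Complex.exp_nat_mul]
  ring_nf

lemma pchi_eq_stdAddChar (α x : Fin n → ZMod p) : pchi p n α x = stdAddChar (α ⬝ᵥ x) :=
  pomega_pow_val _

lemma pchi_comm (α x : Fin n → ZMod p) : pchi p n α x = pchi p n x α := by
  rw [pchi_eq_stdAddChar, pchi_eq_stdAddChar, dotProduct_comm]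

lemma pchi_zero_left (x : Fin n → ZMod p) : pchi p n 0 x = 1 := by
  simp [pchi_eq_stdAddChar]

lemma pchi_add_left (α β x : Fin n → ZMod p) :
    pchi p n (α + β) x = pchi p n α x * pchi p n β x := by
  simp only [pchi_eq_stdAddChar, add_dotProduct, AddChar.map_add_eq_mul]

lemma pchi_neg_left (α x : Fin n → ZMod p) : pchi p n (-α) x = conj (pchi p n α x) := by
  simp only [pchi_eq_stdAddChar, neg_dotProduct, AddChar.map_neg_eq_conj]

lemma conj_pchi_mul_pchi (γ x y : Fin n → ZMod p) :
    conj (pchi p n γ x) * pchi p n γ y = pchi p n γ (y - x) := by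
  simp only [pchi_eq_stdAddChar, ← AddChar.map_neg_eq_conj, ← AddChar.map_add_eq_mul,
    dotProduct_sub, neg_add_eq_sub]

lemma sum_pchi (α : Fin n → ZMod p) : ∑ x, pchi p n α x = if α = 0 then (p : ℂ) ^ n else 0 := by
  simp only [pchi_eq_stdAddChar, dotProduct_comm α]
  rw [sum_stdAddChar_dotProduct, Fintype.card_fin]

lemma sum_conj_pchi_mul_pchi (x y : Fin n → ZMod p) :
    ∑ γ, conj (pchi p n γ x) * pchi p n γ y = if x = y then (p : ℂ) ^ n else 0 := by
  simp only [conj_pchi_mul_pchi, pchi_comm _ (y - x)]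
  rw [sum_pchi]
  exact if_congr (sub_eq_zero.trans eq_comm) rfl rfl

lemma sum_phat_mul_pchi (f : (Fin n → ZMod p) → ℂ) (x : Fin n → ZMod p) :
    ∑ γ, phat p n f γ * pchi p n γ x = f x := by
  calc ∑ γ, phat p n f γ * pchi p n γ x
      = ((p : ℂ) ^ n)⁻¹ * ∑ y, f y * ∑ γ, conj (pchi p n γ y) * pchi p n γ x := by
        simp only [phat, mul_sum, sum_mul]
        rw [sum_comm]
        exact sum_congr rfl fun _ _ ↦ sum_congr rfl fun _ _ ↦ by ring
    _ = f x := by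
        simp only [sum_conj_pchi_mul_pchi, mul_ite, mul_zero, sum_ite_eq', mem_univ,
          if_true]
        rw [mul_comm (f x)]
        exact inv_mul_cancel_left₀ (pow_ne_zero n (NeZero.ne (p : ℂ))) (f x)

lemma sum_phat_mul_conj_phat (f g : (Fin n → ZMod p) → ℂ) :
    ∑ γ, phat p n f γ * conj (phat p n g γ) = ((p : ℂ) ^ n)⁻¹ * ∑ x, f x * conj (g x) := by
  calc ∑ γ, phat p n f γ * conj (phat p n g γ)
      = ∑ γ, ((p : ℂ) ^ n)⁻¹ * (∑ x, f x * conj (pchi p n γ x)) * conj (phat p n g γ) := rfl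
    _ = ((p : ℂ) ^ n)⁻¹ * ∑ x, f x * conj (∑ γ, phat p n g γ * pchi p n γ x) := by
        simp only [map_sum, map_mul, mul_sum, sum_mul]
        rw [sum_comm]
        exact sum_congr rfl fun _ _ ↦ sum_congr rfl fun _ _ ↦ by ring
    _ = ((p : ℂ) ^ n)⁻¹ * ∑ x, f x * conj (g x) := by
        simp only [sum_phat_mul_pchi]

lemma phat_mul_pchi (f : (Fin n → ZMod p) → ℂ) (β γ : Fin n → ZMod p) :
    phat p n (fun x ↦ f x * pchi p n β x) γ = phat p n f (γ - β) := by
  simp only [phat, sub_eq_add_neg, pchi_add_left, pchi_neg_left, map_mul, Complex.conj_conj]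
  exact congrArg _ (sum_congr rfl fun _ _ ↦ by ring)

lemma conj_phat_of_conj_eq (f : (Fin n → ZMod p) → ℂ) (hf : ∀ x, conj (f x) = f x)
    (γ : Fin n → ZMod p) : conj (phat p n f γ) = phat p n f (-γ) := by
  simp [phat, map_sum, hf, pchi_neg_left]

lemma sum_phat_mul_conj_phat_sub_eq_zero (f : (Fin n → ZMod p) → ℂ)
    (hf : ∀ x, f x * conj (f x) = 1) {β : Fin n → ZMod p} (hβ : β ≠ 0) :
    ∑ γ, phat p n f γ * conj (phat p n f (γ - β)) = 0 := by
  simp only [← phat_mul_pchi, sum_phat_mul_conj_phat, map_mul, ← mul_assoc, hf, one_mul,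
    ← pchi_neg_left, sum_pchi, neg_eq_zero, hβ, if_false, mul_zero]

lemma exists_phat_ne_zero_of_ne (f : (Fin n → ZMod p) → ℂ) (hf : ∃ x y, f x ≠ f y) :
    ∃ γ ≠ 0, phat p n f γ ≠ 0 := by
  contrapose! hf
  have hconst (x : Fin n → ZMod p) : f x = phat p n f 0 := by
    rw [← sum_phat_mul_pchi f x, sum_eq_single 0 (fun γ _ hγ ↦ by rw [hf γ hγ, zero_mul])
      (by simp), pchi_zero_left, mul_one]
  exact fun x y ↦ (hconst x).trans (hconst y).symm

lemma sum_sdiff_phat_mul_conj_phat_sub [DecidableEq (Fin n → ZMod p)]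
    (f : (Fin n → ZMod p) → ℂ) (hreal : ∀ x, conj (f x) = f x)
    (hunit : ∀ x, f x * conj (f x) = 1) {β : Fin n → ZMod p} (hβ : β ≠ 0) :
    ∑ γ ∈ univ \ {0, β}, phat p n f γ * conj (phat p n f (γ - β)) =
      -(2 * phat p n f 0 * phat p n f β) := by
  have hpair : ∑ γ ∈ {0, β}, phat p n f γ * conj (phat p n f (γ - β)) =
      2 * phat p n f 0 * phat p n f β := by
    rw [sum_pair hβ.symm, zero_sub, sub_self, conj_phat_of_conj_eq f hreal,
      conj_phat_of_conj_eq f hreal, neg_neg, neg_zero]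
    ring
  rw [eq_neg_iff_add_eq_zero, ← hpair, sum_sdiff (subset_univ _),
    sum_phat_mul_conj_phat_sub_eq_zero f hunit hβ]

end Fourier

lemma mul_le_mul_min_of_le {a b c : ℝ} (ha : 0 ≤ a) (hb : 0 ≤ b) (hac : a ≤ c) (hbc : b ≤ c) :
    a * b ≤ c * min a b := by
  rw [← min_mul_max, mul_comm c]
  exact mul_le_mul_of_nonneg_left (max_le hac hbc) (le_min ha hb)

lemma norm_sum_mul_conj_le_mul_sum_min {ι : Type*} (s : Finset ι) (u v : ι → ℂ) {c : ℝ}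
    (hu : ∀ i ∈ s, ‖u i‖ ≤ c) (hv : ∀ i ∈ s, ‖v i‖ ≤ c) :
    ‖∑ i ∈ s, u i * conj (v i)‖ ≤ c * ∑ i ∈ s, min ‖u i‖ ‖v i‖ := by
  rw [mul_sum]
  refine (norm_sum_le _ _).trans (sum_le_sum fun i hi ↦ ?_)
  rw [norm_mul, Complex.norm_conj]
  exact mul_le_mul_min_of_le (norm_nonneg _) (norm_nonneg _) (hu i hi) (hv i hi)

theorem p_largest_coeff_inequality_general {p n : ℕ} [Fact p.Prime]
    (f : (Fin n → ZMod p) → ℂ) (hf : ∀ x, f x = 1 ∨ f x = -1)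
    (hnc : ∃ x y, f x ≠ f y)
    (β : Fin n → ZMod p) (hβ : β ≠ 0)
    (hβmax : ∀ γ, γ ≠ 0 → ‖phat p n f γ‖ ≤ ‖phat p n f β‖) :
    2 * ‖phat p n f 0‖ ≤
      ∑ γ ∈ Finset.univ \ {0, β},
        min (‖phat p n f γ‖) (‖phat p n f (γ - β)‖) := by
  have hreal (x : Fin n → ZMod p) : conj (f x) = f x := by
    rcases hf x with h | h <;> simp [h]
  have hunit (x : Fin n → ZMod p) : f x * conj (f x) = 1 := by
    rcases hf x with h | h <;> simp [h]
  obtain ⟨γ, hγ, hfγ⟩ := exists_phat_ne_zero_of_ne f hnc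
  have hβpos : 0 < ‖phat p n f β‖ := (norm_pos_iff.2 hfγ).trans_le (hβmax γ hγ)
  refine le_of_mul_le_mul_right ?_ hβpos
  calc 2 * ‖phat p n f 0‖ * ‖phat p n f β‖
      = ‖∑ γ ∈ univ \ {0, β}, phat p n f γ * conj (phat p n f (γ - β))‖ := by
        rw [sum_sdiff_phat_mul_conj_phat_sub f hreal hunit hβ, norm_neg, norm_mul, norm_mul,
          Complex.norm_two]
    _ ≤ ‖phat p n f β‖ * ∑ γ ∈ univ \ {0, β}, min ‖phat p n f γ‖ ‖phat p n f (γ - β)‖ := by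
        have hmem (γ) (hγ : γ ∈ univ \ {0, β}) : γ ≠ 0 ∧ γ - β ≠ 0 := by
          simp only [mem_sdiff, mem_insert, mem_singleton, not_or] at hγ
          exact ⟨hγ.2.1, sub_ne_zero.2 hγ.2.2⟩
        exact norm_sum_mul_conj_le_mul_sum_min _ _ _ (fun γ hγ ↦ hβmax _ (hmem γ hγ).1)
          (fun γ hγ ↦ hβmax _ (hmem γ hγ).2)
    _ = _ := mul_comm _ _

/-- **Lemma 4.4**: if `f : (ZMod p)^n → {−1,1}` is non-constant, `|f̂(0)|` is the
largest Fourier coefficient in absolute value and `|f̂(β)|` (`β ≠ 0`) the second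
largest, then `2|f̂(0)| ≤ ∑_{γ ≠ 0, β} min(|f̂(γ)|, |f̂(γ−β)|)`. -/
theorem p_largest_coeff_inequality {p n : ℕ} [Fact p.Prime] (hp2 : p ≠ 2)
    (f : (Fin n → ZMod p) → ℂ) (hf : ∀ x, f x = 1 ∨ f x = -1)
    (hnc : ∃ x y, f x ≠ f y)
    (h0 : ∀ γ, ‖phat p n f γ‖ ≤ ‖phat p n f 0‖)
    (β : Fin n → ZMod p) (hβ : β ≠ 0)
    (hβmax : ∀ γ, γ ≠ 0 → ‖phat p n f γ‖ ≤ ‖phat p n f β‖) :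
    2 * ‖phat p n f 0‖ ≤
      ∑ γ ∈ Finset.univ \ {0, β},
        min (‖phat p n f γ‖) (‖phat p n f (γ - β)‖) :=
  p_largest_coeff_inequality_general f hf hnc β hβ hβmax
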